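/- arXiv:2508.15497 — 4 statements merged into one kernel-verified Lean document; each statement's English description precedes it below -/
import Mathlib

section
/- Let S be an n × n upper triangular integer matrix with 1's on the diagonal such that S + Sᵗ is positive definite. Then the matrix M = S^{-1}Sᵗ has finite order, so all its eigenvalues are roots of unity, and -1 is not an eigenvalue of M. -/
open Matrix Polynomial

lemma map_pow_cast {R : Type*} [CommRing R] {m : Type*} [Fintype m] [DecidableEq m]
    (M : Matrix m m ℤ) (k : ℕ) :
    (M ^ k).map (Int.cast : ℤ → R) = (M.map (Int.cast : ℤ → R)) ^ k := by
  rw [show (Int.cast : ℤ → R) = ⇑(Int.castRingHom R) from rfl]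
  induction k with
  | zero => rw [pow_zero, pow_zero, Matrix.map_one _ (map_zero _) (map_one _)]
  | succ k ih => rw [pow_succ, pow_succ, Matrix.map_mul, ih]

lemma det_map_cast {R : Type*} [CommRing R] {m : Type*} [Fintype m] [DecidableEq m]
    (X : Matrix m m ℤ) :
    (X.map (Int.cast : ℤ → R)).det = (X.det : R) := by
  rw [show (Int.cast : ℤ → R) = ⇑(Int.castRingHom R) from rfl, ← RingHom.mapMatrix_apply,
    ← RingHom.map_det]

lemma map_conj_cast {R : Type*} [CommRing R] {m : Type*} [Fintype m] [DecidableEq m]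
    (P Q : Matrix m m ℤ) (h : Pᵀ * Q * P = Q) :
    (P.map (Int.cast : ℤ → R))ᵀ * Q.map (Int.cast : ℤ → R) * P.map (Int.cast : ℤ → R) =
      Q.map (Int.cast : ℤ → R) := by
  rw [← Matrix.transpose_map, show (Int.cast : ℤ → R) = ⇑(Int.castRingHom R) from rfl,
    ← Matrix.map_mul, ← Matrix.map_mul, h]

lemma eval_charpoly_aux {m : Type*} [Fintype m] [DecidableEq m] {R : Type*} [CommRing R]
    (A : Matrix m m R) (μ : R) :
    A.charpoly.eval μ = (μ • (1 : Matrix m m R) - A).det := by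
  rw [Matrix.charpoly, ← Polynomial.coe_evalRingHom, RingHom.map_det]
  congr 1
  ext i j
  by_cases h : i = j <;>
    simp [charmatrix_apply, h, Matrix.one_apply, Matrix.smul_apply, Matrix.sub_apply,
      Matrix.diagonal_apply]

lemma orth_entry_bound {n : ℕ} (F : Matrix (Fin n) (Fin n) ℝ) (h : Fᵀ * F = 1) (a b : Fin n) :
    |F a b| ≤ 1 := by
  have h1 : ∑ c, F c b * F c b = 1 := by
    have := congrFun (congrFun h b) b
    simpa [Matrix.mul_apply, Matrix.one_apply, Matrix.transpose_apply] using this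
  rw [← sq_le_one_iff_abs_le_one, sq, ← h1]
  exact Finset.single_le_sum (f := fun c => F c b * F c b)
    (fun c _ => mul_self_nonneg _) (Finset.mem_univ a)

lemma conj_entry_bound {n : ℕ} (P F Q : Matrix (Fin n) (Fin n) ℝ)
    (hF : ∀ a b, |F a b| ≤ 1) (i j : Fin n) :
    |(P * F * Q) i j| ≤ ∑ a, ∑ b, |P i a| * |Q b j| := by
  have : (P * F * Q) i j = ∑ b, ∑ a, P i a * F a b * Q b j := by
    simp [Matrix.mul_apply, Finset.sum_mul]
  rw [this, Finset.sum_comm]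
  calc |∑ a, ∑ b, P i a * F a b * Q b j| ≤ ∑ a, ∑ b, |P i a * F a b * Q b j| := by
        apply (Finset.abs_sum_le_sum_abs _ _).trans
        exact Finset.sum_le_sum fun a _ => Finset.abs_sum_le_sum_abs _ _
    _ ≤ ∑ a, ∑ b, |P i a| * |Q b j| := by
        apply Finset.sum_le_sum; intro a _; apply Finset.sum_le_sum; intro b _
        rw [abs_mul, abs_mul]
        calc |P i a| * |F a b| * |Q b j| ≤ |P i a| * 1 * |Q b j| := by
              apply mul_le_mul_of_nonneg_right _ (abs_nonneg _)
              exact mul_le_mul_of_nonneg_left (hF a b) (abs_nonneg _)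
          _ = |P i a| * |Q b j| := by ring

theorem stmt4 (n : ℕ) (S : Matrix (Fin n) (Fin n) ℤ)
    (htri : ∀ i j, j < i → S i j = 0) (hdiag : ∀ i, S i i = 1)
    (hpd : ((S + S.transpose).map (Int.cast : ℤ → ℝ)).PosDef) :
    (∃ k : ℕ, 0 < k ∧ (S⁻¹ * S.transpose) ^ k = 1) ∧
    (∀ μ : ℂ,
      (Matrix.charpoly ((S⁻¹ * S.transpose).map (Int.cast : ℤ → ℂ))).IsRoot μ →
        ∃ k : ℕ, 0 < k ∧ μ ^ k = 1) ∧
    ¬ (Matrix.charpoly ((S⁻¹ * S.transpose).map (Int.cast : ℤ → ℂ))).IsRoot (-1) := by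
  classical
  have hdetS : S.det = 1 := by
    rw [Matrix.det_of_upperTriangular (fun i j hij => htri i j hij)]
    simp [hdiag]
  have hu : IsUnit S.det := hdetS ▸ isUnit_one
  have huT : IsUnit (Sᵀ).det := by rwa [Matrix.det_transpose]
  have h1 : S⁻¹ * S = 1 := Matrix.nonsing_inv_mul S hu
  have h2 : S * S⁻¹ = 1 := Matrix.mul_nonsing_inv S hu
  have h3 : (Sᵀ)⁻¹ * Sᵀ = 1 := Matrix.nonsing_inv_mul _ huT
  set M := S⁻¹ * Sᵀ with hM
  have hMT : Mᵀ = S * (Sᵀ)⁻¹ := by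
    rw [hM, Matrix.transpose_mul, Matrix.transpose_nonsing_inv, Matrix.transpose_transpose]
  have hform : Mᵀ * (S + Sᵀ) * M = S + Sᵀ := by
    rw [hMT, hM]
    calc S * Sᵀ⁻¹ * (S + Sᵀ) * (S⁻¹ * Sᵀ)
        = S * Sᵀ⁻¹ * (S * S⁻¹ * Sᵀ) + S * (Sᵀ⁻¹ * Sᵀ) * (S⁻¹ * Sᵀ) := by
          simp only [Matrix.mul_add, Matrix.add_mul, Matrix.mul_assoc]
      _ = S + Sᵀ := by
          rw [h2, h3]
          simp only [Matrix.mul_one, Matrix.one_mul, Matrix.mul_assoc]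
          rw [h3, ← Matrix.mul_assoc, h2]
          simp
  have hdetM : M.det = 1 := by
    rw [hM, Matrix.det_mul, Matrix.det_nonsing_inv, Matrix.det_transpose, hdetS]
    simp
  -- powers preserve the form
  have hformpow : ∀ k : ℕ, (M ^ k)ᵀ * (S + Sᵀ) * (M ^ k) = S + Sᵀ := by
    intro k
    induction k with
    | zero => simp
    | succ k ih =>
        rw [pow_succ, Matrix.transpose_mul]
        calc (Mᵀ * (M ^ k)ᵀ) * (S + Sᵀ) * (M ^ k * M)
            = Mᵀ * ((M ^ k)ᵀ * (S + Sᵀ) * (M ^ k)) * M := by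
              simp only [Matrix.mul_assoc]
          _ = S + Sᵀ := by rw [ih, hform]
  -- part 1: finite order
  have hfin : ∃ k : ℕ, 0 < k ∧ M ^ k = 1 := by
    -- real side
    set B : Matrix (Fin n) (Fin n) ℝ := (S + Sᵀ).map (Int.cast : ℤ → ℝ) with hB
    obtain ⟨C, hC⟩ : ∃ C : Matrix (Fin n) (Fin n) ℝ, B = Cᴴ * C := by
      open scoped MatrixOrder Matrix.Norms.L2Operator in
      exact CStarAlgebra.nonneg_iff_eq_star_mul_self.mp hpd.posSemidef.nonneg
    rw [Matrix.conjTranspose_eq_transpose_of_trivial] at hC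
    have hdetB : B.det ≠ 0 := ne_of_gt hpd.det_pos
    have hdetC : IsUnit C.det := by
      rw [isUnit_iff_ne_zero]
      intro h
      rw [hC, Matrix.det_mul, h, mul_zero] at hdetB
      exact hdetB rfl
    have hC1 : C⁻¹ * C = 1 := Matrix.nonsing_inv_mul C hdetC
    have hC2 : C * C⁻¹ = 1 := Matrix.mul_nonsing_inv C hdetC
    -- entry bound for every power
    set R : ℝ := ∑ i, ∑ j, ∑ a, ∑ b, |C⁻¹ i a| * |C b j| with hR
    have hbound : ∀ (k : ℕ) (i j : Fin n), |((M ^ k).map (Int.cast : ℤ → ℝ)) i j| ≤ R := by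
      intro k i j
      set A : Matrix (Fin n) (Fin n) ℝ := (M ^ k).map (Int.cast : ℤ → ℝ) with hA
      have hAB : Aᵀ * B * A = B := map_conj_cast _ _ (hformpow k)
      set F : Matrix (Fin n) (Fin n) ℝ := C * A * C⁻¹ with hF
      have hFo : Fᵀ * F = 1 := by
        rw [hF]
        simp only [Matrix.transpose_mul]
        calc C⁻¹ᵀ * (Aᵀ * Cᵀ) * (C * A * C⁻¹)
            = C⁻¹ᵀ * (Aᵀ * (Cᵀ * C) * A) * C⁻¹ := by simp only [Matrix.mul_assoc]
          _ = C⁻¹ᵀ * Cᵀ * (C * C⁻¹) := by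
              rw [← hC, hAB, hC]; simp only [Matrix.mul_assoc]
          _ = 1 := by rw [hC2, Matrix.mul_one, ← Matrix.transpose_mul, hC2, Matrix.transpose_one]
      have hAeq : A = C⁻¹ * F * C := by
        rw [hF]
        calc A = (C⁻¹ * C) * A * (C⁻¹ * C) := by rw [hC1]; simp
          _ = C⁻¹ * (C * A * C⁻¹) * C := by simp only [Matrix.mul_assoc]
      rw [hAeq]
      refine (conj_entry_bound C⁻¹ F C (orth_entry_bound F hFo) i j).trans ?_
      rw [hR]
      have hnn : ∀ (i' j' : Fin n), 0 ≤ ∑ a, ∑ b, |C⁻¹ i' a| * |C b j'| := by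
        intro i' j'
        apply Finset.sum_nonneg; intro a _; apply Finset.sum_nonneg; intro b _
        positivity
      calc (∑ a, ∑ b, |C⁻¹ i a| * |C b j|)
          ≤ ∑ j', ∑ a, ∑ b, |C⁻¹ i a| * |C b j'| :=
            Finset.single_le_sum (f := fun j' => ∑ a, ∑ b, |C⁻¹ i a| * |C b j'|)
              (fun j' _ => hnn i j') (Finset.mem_univ j)
        _ ≤ ∑ i', ∑ j', ∑ a, ∑ b, |C⁻¹ i' a| * |C b j'| :=
            Finset.single_le_sum (f := fun i' => ∑ j', ∑ a, ∑ b, |C⁻¹ i' a| * |C b j'|)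
              (fun i' _ => Finset.sum_nonneg fun j' _ => hnn i' j') (Finset.mem_univ i)
    -- integer entries bounded
    set mR : ℤ := ⌈R⌉ with hmR
    have hboundZ : ∀ (k : ℕ) (i j : Fin n), (M ^ k) i j ∈ Set.Icc (-mR) mR := by
      intro k i j
      have hb := hbound k i j
      rw [Matrix.map_apply] at hb
      have h' : |(M ^ k) i j| ≤ mR := by
        have h0 : ((|(M ^ k) i j| : ℤ) : ℝ) ≤ R := by rw [Int.cast_abs]; exact hb
        exact_mod_cast h0.trans (Int.le_ceil R)
      rw [Set.mem_Icc]
      exact abs_le.mp h'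
    have hTfin : Set.Finite {N : Matrix (Fin n) (Fin n) ℤ | ∀ i j, N i j ∈ Set.Icc (-mR) mR} := by
      apply Set.Finite.subset
        (Set.Finite.pi (fun i : Fin n => Set.Finite.pi
          (fun j : Fin n => Set.finite_Icc (-mR) mR)))
      intro N hN
      simp only [Set.mem_pi, Set.mem_univ, forall_true_left]
      exact fun i j => hN i j
    obtain ⟨a, -, b, -, hab, heq⟩ :=
      Set.infinite_univ.exists_ne_map_eq_of_mapsTo
        (f := fun k : ℕ => M ^ k)
        (t := {N : Matrix (Fin n) (Fin n) ℤ | ∀ i j, N i j ∈ Set.Icc (-mR) mR})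
        (fun k _ => hboundZ k) hTfin
    wlog hlt : a < b generalizing a b
    · exact this b a hab.symm heq.symm ((hab.lt_or_gt).resolve_left hlt)
    refine ⟨b - a, Nat.sub_pos_of_lt hlt, ?_⟩
    have hMa : IsUnit ((M ^ a).det) := by
      rw [Matrix.det_pow, hdetM, one_pow]; exact isUnit_one
    have : M ^ (b - a) * M ^ a = 1 * M ^ a := by
      rw [← pow_add, Nat.sub_add_cancel hlt.le, one_mul, ← heq]
    calc M ^ (b - a) = M ^ (b - a) * (M ^ a * (M ^ a)⁻¹) := by
          rw [Matrix.mul_nonsing_inv _ hMa, Matrix.mul_one]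
      _ = 1 := by rw [← Matrix.mul_assoc, this, one_mul, Matrix.mul_nonsing_inv _ hMa]
  obtain ⟨k, hk, hMk⟩ := hfin
  -- complex side
  set Aℂ : Matrix (Fin n) (Fin n) ℂ := M.map (Int.cast : ℤ → ℂ) with hAℂ
  have hAk : Aℂ ^ k = 1 := by
    rw [hAℂ, ← map_pow_cast, hMk, Matrix.map_one _ (by simp) (by simp)]
  refine ⟨⟨k, hk, hMk⟩, ?_, ?_⟩
  · intro μ hμ
    rw [Polynomial.IsRoot, eval_charpoly_aux] at hμ
    obtain ⟨v, hv, hveq⟩ := (Matrix.exists_mulVec_eq_zero_iff).mpr hμ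
    have hAv : Aℂ *ᵥ v = μ • v := by
      have : (μ • (1 : Matrix (Fin n) (Fin n) ℂ)) *ᵥ v - Aℂ *ᵥ v = 0 := by
        rw [← Matrix.sub_mulVec, hveq]
      have h2 : (μ • (1 : Matrix (Fin n) (Fin n) ℂ)) *ᵥ v = μ • v := by
        rw [Matrix.smul_mulVec, Matrix.one_mulVec]
      rw [h2, sub_eq_zero] at this
      exact this.symm
    have hpowv : ∀ m : ℕ, (Aℂ ^ m) *ᵥ v = μ ^ m • v := by
      intro m
      induction m with
      | zero => simp
      | succ m ih =>
          rw [pow_succ, ← Matrix.mulVec_mulVec, hAv, Matrix.mulVec_smul, ih, smul_smul,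
            pow_succ]
          ring_nf
    have := hpowv k
    rw [hAk, Matrix.one_mulVec] at this
    obtain ⟨i, hi⟩ := Function.ne_iff.mp hv
    refine ⟨k, hk, ?_⟩
    have := congrFun this.symm i
    simp only [Pi.smul_apply, smul_eq_mul] at this
    -- this : μ ^ k * v i = v i
    have := mul_right_cancel₀ hi (this.trans (one_mul (v i)).symm)
    exact this
  · intro hroot
    rw [Polynomial.IsRoot, eval_charpoly_aux] at hroot
    have hdet1M : (1 + M).det = (S + Sᵀ).det := by
      have : (1 : Matrix (Fin n) (Fin n) ℤ) + M = S⁻¹ * (S + Sᵀ) := by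
        rw [Matrix.mul_add, h1, hM]
      rw [this, Matrix.det_mul, Matrix.det_nonsing_inv, hdetS]
      simp
    have hdetSST : (S + Sᵀ).det ≠ 0 := by
      intro h
      have : ((S + Sᵀ).map (Int.cast : ℤ → ℝ)).det = 0 := by
        rw [det_map_cast, h, Int.cast_zero]
      exact ne_of_gt hpd.det_pos this
    have : ((-1 : ℂ) • (1 : Matrix (Fin n) (Fin n) ℂ) - Aℂ).det =
        (-1 : ℂ) ^ n * ((1 + M).map (Int.cast : ℤ → ℂ)).det := by
      have h' : (-1 : ℂ) • (1 : Matrix (Fin n) (Fin n) ℂ) - Aℂ =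
          -((1 + M).map (Int.cast : ℤ → ℂ)) := by
        ext i j
        simp [Matrix.map_apply, Matrix.add_apply, Matrix.one_apply, hAℂ, Matrix.smul_apply,
          Matrix.sub_apply, Matrix.neg_apply]
        split <;> ring
      rw [h', Matrix.det_neg]
      simp
    rw [this] at hroot
    have hcast : ((1 + M).map (Int.cast : ℤ → ℂ)).det = ((1 + M).det : ℂ) :=
      det_map_cast _
    rw [hcast, hdet1M] at hroot
    have : ((S + Sᵀ).det : ℂ) = 0 := by
      rcases mul_eq_zero.mp hroot with h | h
      · exact absurd h (pow_ne_zero n (by norm_num))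
      · exact h
    exact hdetSST (by exact_mod_cast this)
end

section
/- Let S be an n × n upper triangular integer matrix with 1's on the diagonal such that S + Sᵗ is positive semidefinite. Then every eigenvalue of M = S^{-1}Sᵗ is a root of unity, and the algebraic multiplicity of -1 as an eigenvalue of M is even. -/
open Polynomial Matrix
open scoped ComplexOrder

private lemma eval_charpoly' {n : ℕ} (A : Matrix (Fin n) (Fin n) ℂ) (z : ℂ) :
    A.charpoly.eval z = (z • (1 : Matrix (Fin n) (Fin n) ℂ) - A).det := by
  rw [Matrix.charpoly, ← Polynomial.coe_evalRingHom, RingHom.map_det]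
  congr 1
  ext i j
  by_cases h : i = j
  · subst h
    simp [Matrix.charmatrix_apply_eq, Matrix.one_apply]
  · simp [Matrix.charmatrix_apply_ne _ _ _ h, Matrix.one_apply, h]

/-- Every root of the characteristic polynomial has `z * conj z = 1`. -/
private lemma root_mul_conj {n : ℕ} (S : Matrix (Fin n) (Fin n) ℤ)
    (hdet : S.det = 1)
    (hpsd : ((S + S.transpose).map (Int.cast : ℤ → ℝ)).PosSemidef)
    {z : ℂ} (hz : (Matrix.charpoly ((S⁻¹ * S.transpose).map (Int.cast : ℤ → ℂ))).IsRoot z) :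
    z * (starRingEnd ℂ) z = 1 := by
  classical
  set Sc : Matrix (Fin n) (Fin n) ℂ := S.map (Int.cast : ℤ → ℂ) with hScdef
  set Mc : Matrix (Fin n) (Fin n) ℂ := (S⁻¹ * S.transpose).map (Int.cast : ℤ → ℂ) with hMcdef
  have hdetu : IsUnit S.det := by rw [hdet]; exact isUnit_one
  have hSM : S * (S⁻¹ * S.transpose) = S.transpose := by
    rw [← Matrix.mul_assoc, Matrix.mul_nonsing_inv _ hdetu, Matrix.one_mul]
  have hmapmul : ∀ (A B : Matrix (Fin n) (Fin n) ℤ),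
      (A * B).map (Int.cast : ℤ → ℂ) =
        (A.map (Int.cast : ℤ → ℂ)) * (B.map (Int.cast : ℤ → ℂ)) := by
    intro A B
    exact A.map_mul (f := Int.castRingHom ℂ)
  have hSMc : Sc * Mc = Sc.transpose := by
    have h := congrArg (fun A => A.map (Int.cast : ℤ → ℂ)) hSM
    rw [hmapmul] at h
    rw [h, hScdef, Matrix.transpose_map]
  have hdetSc : Sc.det = 1 := by
    have : Sc.det = (Int.castRingHom ℂ) S.det := (RingHom.map_det (Int.castRingHom ℂ) S).symm
    rw [this, hdet]; simp
  have hdet0 : (z • (1 : Matrix (Fin n) (Fin n) ℂ) - Mc).det = 0 := by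
    rw [← eval_charpoly']; exact hz
  obtain ⟨v, hv0, hv⟩ := (Matrix.exists_mulVec_eq_zero_iff).mpr hdet0
  have hMv : Mc *ᵥ v = z • v := by
    have h1 : (z • (1 : Matrix (Fin n) (Fin n) ℂ) - Mc) *ᵥ v = z • v - Mc *ᵥ v := by
      rw [Matrix.sub_mulVec, Matrix.smul_mulVec, Matrix.one_mulVec]
    rw [h1] at hv
    exact (sub_eq_zero.mp hv).symm
  have hStv : Sc.transpose *ᵥ v = z • (Sc *ᵥ v) := by
    rw [← hSMc, ← Matrix.mulVec_mulVec, hMv, Matrix.mulVec_smul]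
  have hScH : Sc.conjTranspose = Sc.transpose := by
    ext i j
    simp [Matrix.conjTranspose_apply, hScdef, Matrix.map_apply]
  set d : ℂ := star v ⬝ᵥ (Sc *ᵥ v) with hd
  have hconjd : (starRingEnd ℂ) d = z * d := by
    have h1 : (starRingEnd ℂ) d = star (Sc *ᵥ v) ⬝ᵥ v := by
      have : star d = star (Sc *ᵥ v) ⬝ᵥ star (star v) := by
        rw [hd, ← Matrix.star_dotProduct_star, star_star]
      simpa [star_star] using this
    rw [h1, Matrix.star_mulVec, hScH, ← Matrix.dotProduct_mulVec, hStv]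
    simp [dotProduct_smul, hd, smul_eq_mul]
  have hmapadd : (S + S.transpose).map (Int.cast : ℤ → ℂ) = Sc + Sc.transpose := by
    ext i j
    simp [Matrix.map_apply, hScdef]
  by_cases hdz : d = 0
  · -- radical case : the vector is in the kernel of S + Sᵀ, so z = -1
    obtain ⟨C, hC⟩ : ∃ C : Matrix (Fin n) (Fin n) ℝ,
        (S + S.transpose).map (Int.cast : ℤ → ℝ) = Cᴴ * C := by
      open scoped MatrixOrder in
      obtain ⟨B, hB⟩ := CStarAlgebra.nonneg_iff_eq_star_mul_self.mp hpsd.nonneg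
      exact ⟨B, hB⟩
    set Cc : Matrix (Fin n) (Fin n) ℂ := C.map (Complex.ofReal) with hCc
    have hBc : (S + S.transpose).map (Int.cast : ℤ → ℂ) = Cc.conjTranspose * Cc := by
      have h1 : (S + S.transpose).map (Int.cast : ℤ → ℂ) =
          ((S + S.transpose).map (Int.cast : ℤ → ℝ)).map (Complex.ofReal) := by
        ext i j; simp [Matrix.map_apply]
      rw [h1, hC]
      ext i j
      simp [Matrix.map_apply, Matrix.mul_apply, Matrix.conjTranspose_apply, hCc,
        Complex.conj_ofReal]
    have hBv0 : ((S + S.transpose).map (Int.cast : ℤ → ℂ)) *ᵥ v = 0 := by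
      have hBcq : star v ⬝ᵥ (((S + S.transpose).map (Int.cast : ℤ → ℂ)) *ᵥ v) = 0 := by
        rw [hmapadd, Matrix.add_mulVec, dotProduct_add, ← hd, hStv]
        have h2 : star v ⬝ᵥ z • (Sc *ᵥ v) = z * d := by simp [hd, smul_eq_mul]
        rw [h2, hdz]; ring
      have hCv : Cc *ᵥ v = 0 := by
        rw [hBc] at hBcq
        rw [← Matrix.mulVec_mulVec, Matrix.dotProduct_mulVec, ← Matrix.star_mulVec] at hBcq
        exact dotProduct_star_self_eq_zero.mp hBcq
      rw [hBc, ← Matrix.mulVec_mulVec, hCv, Matrix.mulVec_zero]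
    have hSneg : Sc.transpose *ᵥ v = -(Sc *ᵥ v) := by
      rw [hmapadd, Matrix.add_mulVec] at hBv0
      linear_combination (norm := module) hBv0
    have hSv0 : Sc *ᵥ v ≠ 0 := by
      intro h
      have : Sc.det = 0 := Matrix.exists_mulVec_eq_zero_iff.mp ⟨v, hv0, h⟩
      rw [hdetSc] at this
      exact one_ne_zero this
    have hz1 : (z + 1) • (Sc *ᵥ v) = 0 := by
      rw [add_smul, one_smul, ← hStv, hSneg]
      abel
    have hzm1 : z = -1 := by
      rcases smul_eq_zero.mp hz1 with h | h
      · exact eq_neg_of_add_eq_zero_left h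
      · exact absurd h hSv0
    rw [hzm1]; simp
  · -- nondegenerate case : |z| = 1
    have h2 : d = (starRingEnd ℂ) z * (z * d) := by
      have h := congrArg (starRingEnd ℂ) hconjd
      rw [Complex.conj_conj] at h
      rw [show (starRingEnd ℂ) (z * d) = (starRingEnd ℂ) z * (starRingEnd ℂ) d from
        map_mul _ _ _, hconjd] at h
      exact h
    have h4 : ((starRingEnd ℂ) z * z - 1) * d = 0 := by linear_combination -h2
    rcases mul_eq_zero.mp h4 with h | h
    · rw [mul_comm]
      exact sub_eq_zero.mp h
    · exact absurd h hdz

private lemma pair_prod : ∀ (N : ℕ) (R : Multiset ℂ), R.card ≤ N →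
    R.map (starRingEnd ℂ) = R → (∀ z ∈ R, z * (starRingEnd ℂ) z = 1) →
    R.prod = (-1 : ℂ) ^ (R.count (-1)) := by
  intro N
  induction N with
  | zero =>
    intro R hcard _ _
    have : R = 0 := Multiset.card_eq_zero.mp (Nat.le_zero.mp hcard)
    subst this; simp
  | succ N ih =>
    intro R hcard hconj hone
    rcases Multiset.empty_or_exists_mem R with hR | ⟨z, hzR⟩
    · subst hR; simp
    by_cases hz1 : z = 1
    · subst hz1
      obtain ⟨R', rfl⟩ := Multiset.exists_cons_of_mem hzR
      have hconj' : R'.map (starRingEnd ℂ) = R' := by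
        have h : (1 : ℂ) ::ₘ R'.map (starRingEnd ℂ) = 1 ::ₘ R' := by
          simpa using hconj
        exact (Multiset.cons_inj_right _).mp h
      have hcard' : R'.card ≤ N := by
        simp only [Multiset.card_cons] at hcard; omega
      have h := ih R' hcard' hconj' (fun w hw => hone w (Multiset.mem_cons_of_mem hw))
      have hne : (1 : ℂ) ≠ -1 := by norm_num
      simp only [Multiset.prod_cons, Multiset.count_cons, one_mul, h]
      norm_num
    by_cases hzm1 : z = -1
    · subst hzm1
      obtain ⟨R', rfl⟩ := Multiset.exists_cons_of_mem hzR
      have hconj' : R'.map (starRingEnd ℂ) = R' := by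
        have h : (-1 : ℂ) ::ₘ R'.map (starRingEnd ℂ) = -1 ::ₘ R' := by
          simpa using hconj
        exact (Multiset.cons_inj_right _).mp h
      have hcard' : R'.card ≤ N := by
        simp only [Multiset.card_cons] at hcard; omega
      have h := ih R' hcard' hconj' (fun w hw => hone w (Multiset.mem_cons_of_mem hw))
      simp only [Multiset.prod_cons, Multiset.count_cons, h, pow_add, if_pos rfl, if_true]
      ring
    · have hzz := hone z hzR
      have hconjz_ne : (starRingEnd ℂ) z ≠ z := by
        intro h
        rw [h] at hzz
        rcases mul_self_eq_one_iff.mp hzz with h1 | h1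
        · exact hz1 h1
        · exact hzm1 h1
      have hczR : (starRingEnd ℂ) z ∈ R := by
        rw [← hconj]; exact Multiset.mem_map_of_mem _ hzR
      obtain ⟨R', rfl⟩ := Multiset.exists_cons_of_mem hzR
      have hczR' : (starRingEnd ℂ) z ∈ R' := by
        rcases Multiset.mem_cons.mp hczR with h | h
        · exact absurd h hconjz_ne
        · exact h
      obtain ⟨R'', rfl⟩ := Multiset.exists_cons_of_mem hczR'
      have hmap : (starRingEnd ℂ) z ::ₘ z ::ₘ R''.map (starRingEnd ℂ) =
          z ::ₘ (starRingEnd ℂ) z ::ₘ R'' := by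
        simpa [Complex.conj_conj] using hconj
      have hconj'' : R''.map (starRingEnd ℂ) = R'' := by
        rw [Multiset.cons_swap] at hmap
        exact (Multiset.cons_inj_right _).mp ((Multiset.cons_inj_right _).mp hmap)
      have hcard'' : R''.card ≤ N := by
        simp only [Multiset.card_cons] at hcard; omega
      have h := ih R'' hcard'' hconj''
        (fun w hw => hone w (Multiset.mem_cons_of_mem (Multiset.mem_cons_of_mem hw)))
      have hcz_ne : (starRingEnd ℂ) z ≠ -1 := by
        intro hcz
        apply hzm1
        have := congrArg (starRingEnd ℂ) hcz
        rw [Complex.conj_conj] at this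
        simpa using this
      rw [Multiset.prod_cons, Multiset.prod_cons, ← mul_assoc, hzz, one_mul, h]
      congr 1
      have h1 : (-1 : ℂ) ≠ z := fun hh => hzm1 hh.symm
      have h2 : (-1 : ℂ) ≠ (starRingEnd ℂ) z := fun hh => hcz_ne hh.symm
      simp [Multiset.count_cons, h1, h2]

theorem stmt5 (n : ℕ) (S : Matrix (Fin n) (Fin n) ℤ)
    (htri : ∀ i j, j < i → S i j = 0) (hdiag : ∀ i, S i i = 1)
    (hpsd : ((S + S.transpose).map (Int.cast : ℤ → ℝ)).PosSemidef) :
    (∀ μ : ℂ,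
      (Matrix.charpoly ((S⁻¹ * S.transpose).map (Int.cast : ℤ → ℂ))).IsRoot μ →
        ∃ k : ℕ, 0 < k ∧ μ ^ k = 1) ∧
    Even (Polynomial.rootMultiplicity (-1)
      (Matrix.charpoly ((S⁻¹ * S.transpose).map (Int.cast : ℤ → ℂ)))) := by
  classical
  have hdet : S.det = 1 := by
    have hbt : S.BlockTriangular id := fun i j h => htri i j h
    rw [Matrix.det_of_upperTriangular hbt]
    simp [hdiag]
  set p : Polynomial ℂ := Matrix.charpoly ((S⁻¹ * S.transpose).map (Int.cast : ℤ → ℂ)) with hp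
  set q : Polynomial ℤ := Matrix.charpoly (S⁻¹ * S.transpose) with hq
  have hnormsq : ∀ w : ℂ, p.IsRoot w → w * (starRingEnd ℂ) w = 1 :=
    fun w hw => root_mul_conj S hdet hpsd hw
  have hpmap : p = q.map (Int.castRingHom ℂ) := by
    rw [hp, hq, ← Matrix.charpoly_map]
    rfl
  have hpmonic : p.Monic := Matrix.charpoly_monic _
  have hpne : p ≠ 0 := hpmonic.ne_zero
  constructor
  · intro μ hμ
    have hint : IsIntegral ℤ μ := by
      refine ⟨q, Matrix.charpoly_monic _, ?_⟩
      rw [← Polynomial.eval_map]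
      have : (algebraMap ℤ ℂ) = Int.castRingHom ℂ := rfl
      rw [this, ← hpmap]
      exact hμ
    have halgQ : IsIntegral ℚ μ := hint.tower_top
    let K := IntermediateField.adjoin ℚ ({μ} : Set ℂ)
    haveI : FiniteDimensional ℚ K := IntermediateField.adjoin.finiteDimensional halgQ
    haveI : NumberField K := { to_charZero := inferInstance, to_finiteDimensional := inferInstance }
    set x : K := IntermediateField.AdjoinSimple.gen ℚ μ with hx
    have hxμ : (algebraMap K ℂ) x = μ := rfl
    have hxi : IsIntegral ℤ x := by
      rw [← isIntegral_algebraMap_iff (algebraMap K ℂ).injective, hxμ]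
      exact hint
    have hφ : ∀ φ : K →+* ℂ, ‖φ x‖ = 1 := by
      intro φ
      have h0 : Polynomial.aeval x q = 0 := by
        apply (algebraMap K ℂ).injective
        rw [map_zero, ← Polynomial.aeval_algebraMap_apply, hxμ]
        rw [show (Polynomial.aeval μ) q = Polynomial.eval μ (q.map (Int.castRingHom ℂ)) by
          rw [Polynomial.aeval_def, Polynomial.eval₂_eq_eval_map]; rfl]
        rw [← hpmap]
        exact hμ
      have hroot : p.IsRoot (φ x) := by
        have h1 : φ (Polynomial.aeval x q) = 0 := by rw [h0, map_zero]
        rw [Polynomial.aeval_def, Polynomial.hom_eval₂] at h1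
        have h2 : φ.comp (algebraMap ℤ K) = Int.castRingHom ℂ := Subsingleton.elim _ _
        rw [h2] at h1
        rw [Polynomial.IsRoot, hpmap, Polynomial.eval_map]
        exact h1
      have h3 := hnormsq _ hroot
      rw [Complex.mul_conj] at h3
      have h4 : Complex.normSq (φ x) = 1 := by exact_mod_cast h3
      have h5 : ‖φ x‖ ^ 2 = 1 := by
        rw [← Complex.sq_norm] at h4
        simpa using h4
      have h6 := norm_nonneg (φ x)
      nlinarith [h5, h6]
    obtain ⟨k, hk0, hk⟩ := NumberField.Embeddings.pow_eq_one_of_norm_eq_one K ℂ hxi hφ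
    exact ⟨k, hk0, by rw [← hxμ, ← map_pow, hk, _root_.map_one]⟩
  · -- parity of the multiplicity of -1
    have hdetq : (S⁻¹ * S.transpose).det = 1 := by
      rw [Matrix.det_mul, Matrix.det_nonsing_inv, Matrix.det_transpose, hdet]
      simp
    have hdetM : ((S⁻¹ * S.transpose).map (Int.cast : ℤ → ℂ)).det = 1 := by
      have : ((S⁻¹ * S.transpose).map (Int.cast : ℤ → ℂ)).det
          = (Int.castRingHom ℂ) (S⁻¹ * S.transpose).det :=
        (RingHom.map_det (Int.castRingHom ℂ) _).symm
      rw [this, hdetq]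
      simp
    have hprod : p.roots.prod = 1 := by
      rw [hp, ← Matrix.det_eq_prod_roots_charpoly]
      exact hdetM
    have hpconj : p.map (starRingEnd ℂ) = p := by
      rw [hpmap, Polynomial.map_map]
      congr 1
      exact Subsingleton.elim _ _
    have hconjroots : p.roots.map (starRingEnd ℂ) = p.roots := by
      have h := Polynomial.Splits.roots_map
        ((Polynomial.splits_iff_card_roots (f := p)).mpr ?hsplit) (starRingEnd ℂ)
      · rw [hpconj] at h
        exact h.symm
      case hsplit =>
        exact (Polynomial.splits_iff_card_roots (f := p)).mp (IsAlgClosed.splits p)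
    have hall : ∀ z ∈ p.roots, z * (starRingEnd ℂ) z = 1 := by
      intro z hz
      exact hnormsq z (Polynomial.isRoot_of_mem_roots hz)
    have hpair := pair_prod (Multiset.card p.roots) p.roots le_rfl hconjroots hall
    rw [hprod] at hpair
    have heven : Even (p.roots.count (-1)) := by
      rw [← neg_one_pow_eq_one_iff_even (R := ℂ) (by norm_num)]
      exact hpair.symm
    rw [← Polynomial.count_roots]
    exact heven
end

section
/- For n ≥ 1 and b ∈ {1,2}, let p ∈ T_{HORb}^{pol}(n,ℝ) and let S = S_{(b)}(p) be the upper triangular unipotent matrix with entries S_{i,i+k} = p_{n-k} for k ≥ 1, and let R = R_{(b)}(p) be the companion matrix of p. Then (-1)^b · S^{-1}Sᵗ = Rⁿ. -/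
open Polynomial Matrix Finset

namespace Stmt14

noncomputable def Pcol {n : ℕ} (A : Matrix (Fin n) (Fin n) ℝ) (j : Fin n) : Polynomial ℝ :=
  ∑ i : Fin n, Polynomial.C (A i j) * Polynomial.X ^ (i : ℕ)

lemma coeff_Pcol {n : ℕ} (A : Matrix (Fin n) (Fin n) ℝ) (j : Fin n) (d : ℕ) :
    (Pcol A j).coeff d = if h : d < n then A ⟨d, h⟩ j else 0 := by
  rw [Pcol, Polynomial.finset_sum_coeff]
  simp only [Polynomial.coeff_C_mul, Polynomial.coeff_X_pow, mul_ite, mul_one, mul_zero]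
  by_cases h : d < n
  · rw [dif_pos h, Finset.sum_eq_single (⟨d, h⟩ : Fin n)]
    · simp
    · intro b _ hb
      rw [if_neg]
      intro hdb
      exact hb (Fin.ext hdb.symm)
    · simp
  · rw [dif_neg h]
    apply Finset.sum_eq_zero
    intro i _
    rw [if_neg]
    intro hdi
    exact h (hdi ▸ i.isLt)

lemma Pcol_eq {n : ℕ} (A B : Matrix (Fin n) (Fin n) ℝ)
    (h : ∀ j, Pcol A j = Pcol B j) : A = B := by
  ext i j
  have := congrArg (fun f => Polynomial.coeff f (i : ℕ)) (h j)
  simpa [coeff_Pcol, i.isLt] using this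

noncomputable def Smat (n : ℕ) (p : Polynomial ℝ) : Matrix (Fin n) (Fin n) ℝ :=
  Matrix.of fun i j =>
    if (i : ℕ) = (j : ℕ) then 1
    else if (i : ℕ) < (j : ℕ) then p.coeff (n - ((j : ℕ) - (i : ℕ))) else 0

noncomputable def Rmat (n : ℕ) (p : Polynomial ℝ) : Matrix (Fin n) (Fin n) ℝ :=
  Matrix.of fun i j =>
    if (i : ℕ) = 0 then -p.coeff (n - 1 - (j : ℕ))
    else if (i : ℕ) = (j : ℕ) + 1 then 1 else 0

noncomputable def Cmat (n : ℕ) (p : Polynomial ℝ) : Matrix (Fin n) (Fin n) ℝ :=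
  Matrix.of fun i j =>
    (if (i : ℕ) = (j : ℕ) + 1 then 1 else 0) + (if (j : ℕ) = n - 1 then -p.coeff i else 0)

variable {n : ℕ} {p : Polynomial ℝ}

lemma Smat_apply (hm : p.Monic) (hd : p.natDegree = n) (i j : Fin n) :
    Smat n p i j = if (i : ℕ) ≤ (j : ℕ) then p.coeff (n - ((j : ℕ) - (i : ℕ))) else 0 := by
  unfold Smat
  simp only [Matrix.of_apply]
  rcases eq_or_ne (i : ℕ) (j : ℕ) with h | h
  · rw [if_pos h, if_pos (le_of_eq h)]
    rw [show n - ((j : ℕ) - (i : ℕ)) = n from by omega, ← hd, hm.coeff_natDegree]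
  · rw [if_neg h]
    rcases lt_or_ge (i : ℕ) (j : ℕ) with h2 | h2
    · rw [if_pos h2, if_pos (le_of_lt h2)]
    · rw [if_neg (by omega), if_neg (by omega)]

lemma fin_sum_ite {n : ℕ} (m : ℕ) (hm : m < n) (f : Fin n → ℝ) :
    (∑ k : Fin n, if (k : ℕ) = m then f k else 0) = f ⟨m, hm⟩ := by
  rw [Finset.sum_eq_single (⟨m, hm⟩ : Fin n)]
  · simp
  · intro b _ hb
    rw [if_neg]
    intro h
    exact hb (Fin.ext h)
  · simp

lemma fin_sum_ite_zero {n : ℕ} (m : ℕ) (hm : n ≤ m) (f : Fin n → ℝ) :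
    (∑ k : Fin n, if (k : ℕ) = m then f k else 0) = 0 := by
  apply Finset.sum_eq_zero
  intro k _
  rw [if_neg]
  intro h
  have := k.isLt
  omega

lemma Cmat_mul_apply (A : Matrix (Fin n) (Fin n) ℝ) (hn : 1 ≤ n) (i j : Fin n) :
    (Cmat n p * A) i j
      = (if h : 1 ≤ (i : ℕ) then A ⟨(i : ℕ) - 1, by omega⟩ j else 0)
        - p.coeff i * A ⟨n - 1, by omega⟩ j := by
  rw [Matrix.mul_apply, sub_eq_add_neg]
  unfold Cmat
  simp only [Matrix.of_apply, add_mul, ite_mul, one_mul, zero_mul, neg_mul]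
  rw [Finset.sum_add_distrib]
  congr 1
  · by_cases h : 1 ≤ (i : ℕ)
    · rw [dif_pos h, show (∑ k : Fin n, if (i : ℕ) = (k : ℕ) + 1 then A k j else 0)
          = ∑ k : Fin n, if (k : ℕ) = (i : ℕ) - 1 then A k j else 0 from
          Finset.sum_congr rfl fun k _ => by
            rcases eq_or_ne ((k : ℕ)) ((i : ℕ) - 1) with hk | hk
            · rw [if_pos (by omega), if_pos hk]
            · rw [if_neg (by omega), if_neg hk],
          fin_sum_ite _ (by omega)]
    · rw [dif_neg h]
      apply Finset.sum_eq_zero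
      intro k _
      rw [if_neg (by omega)]
  · exact fin_sum_ite (n - 1) (by omega) (fun k => -(p.coeff i * A k j))

lemma Pcol_Cmat_mul (hm : p.Monic) (hd : p.natDegree = n) (hn : 1 ≤ n)
    (A : Matrix (Fin n) (Fin n) ℝ) (j : Fin n) :
    Pcol (Cmat n p * A) j
      = Polynomial.X * Pcol A j - Polynomial.C (A ⟨n - 1, by omega⟩ j) * p := by
  have hXmul : ∀ d : ℕ, (Polynomial.X * Pcol A j).coeff d
      = if h : 1 ≤ d ∧ d - 1 < n then A ⟨d - 1, h.2⟩ j else 0 := by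
    intro d
    cases d with
    | zero => simp
    | succ e =>
        rw [Polynomial.coeff_X_mul, coeff_Pcol]
        simp only [Nat.add_sub_cancel]
        by_cases he : e < n
        · rw [dif_pos he, dif_pos ⟨by omega, he⟩]
        · rw [dif_neg he, dif_neg (by omega)]
  ext d
  rw [coeff_Pcol, Polynomial.coeff_sub, Polynomial.coeff_C_mul, hXmul]
  by_cases h : d < n
  · rw [dif_pos h, Cmat_mul_apply _ hn]
    simp only [Fin.val_mk]
    by_cases h1 : 1 ≤ d
    · rw [dif_pos h1, dif_pos ⟨h1, by omega⟩]
      ring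
    · rw [dif_neg h1, dif_neg (by omega)]
      ring
  · rw [dif_neg h]
    have hcn : p.coeff n = 1 := by rw [← hd]; exact hm.coeff_natDegree
    by_cases hdn : d = n
    · rw [hdn, dif_pos ⟨hn, by omega⟩, hcn, mul_one, sub_self]
    · rw [dif_neg (by omega), Polynomial.coeff_eq_zero_of_natDegree_lt (by rw [hd]; omega)]
      ring

lemma Rmat_apply (i j : Fin n) :
    Rmat n p i j = (if (i : ℕ) = 0 then -p.coeff (n - 1 - (j : ℕ)) else 0)
      + (if (i : ℕ) = (j : ℕ) + 1 then 1 else 0) := by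
  unfold Rmat
  simp only [Matrix.of_apply]
  by_cases h1 : (i : ℕ) = 0
  · rw [if_pos h1, if_pos h1, if_neg (by omega), add_zero]
  · rw [if_neg h1, if_neg h1, zero_add]

lemma SR_eq_CS (hm : p.Monic) (hd : p.natDegree = n) (hn : 1 ≤ n) :
    Smat n p * Rmat n p = Cmat n p * Smat n p := by
  ext i k
  rw [Matrix.mul_apply, Cmat_mul_apply _ hn]
  have hL : ∀ j : Fin n, Smat n p i j * Rmat n p j k
      = (if (j : ℕ) = 0 then Smat n p i j * (-p.coeff (n - 1 - (k : ℕ))) else 0)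
        + (if (j : ℕ) = (k : ℕ) + 1 then Smat n p i j else 0) := by
    intro j
    rw [Rmat_apply, mul_add]
    simp only [mul_ite, mul_zero, mul_one]
  rw [Finset.sum_congr rfl fun j _ => hL j, Finset.sum_add_distrib,
    fin_sum_ite 0 (by omega)]
  have hS0 : Smat n p i ⟨0, by omega⟩ = if (i : ℕ) = 0 then 1 else 0 := by
    rw [Smat_apply hm hd]
    simp only [Fin.val_mk]
    rcases eq_or_ne ((i : ℕ)) 0 with h | h
    · rw [if_pos (by omega), if_pos h, show n - (0 - (i : ℕ)) = n from by omega, ← hd,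
        hm.coeff_natDegree]
    · rw [if_neg (by omega), if_neg h]
  have hSn1 : Smat n p ⟨n - 1, by omega⟩ k = if (k : ℕ) = n - 1 then 1 else 0 := by
    rw [Smat_apply hm hd]
    simp only [Fin.val_mk]
    have := k.isLt
    rcases eq_or_ne ((k : ℕ)) (n - 1) with h | h
    · rw [if_pos (by omega), if_pos h, show n - ((k : ℕ) - (n - 1)) = n from by omega, ← hd,
        hm.coeff_natDegree]
    · rw [if_neg (by omega), if_neg h]
  rw [hS0, hSn1]
  have hik := i.isLt
  have hkk := k.isLt
  by_cases hk : (k : ℕ) + 1 < n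
  · rw [fin_sum_ite _ hk, if_neg (show ¬(k : ℕ) = n - 1 from by omega), mul_zero, sub_zero]
    by_cases hi : (i : ℕ) = 0
    · rw [if_pos hi, dif_neg (by omega), Smat_apply hm hd]
      simp only [Fin.val_mk]
      rw [if_pos (by omega), hi, show n - ((k : ℕ) + 1 - 0) = n - 1 - (k : ℕ) from by omega]
      ring
    · rw [if_neg hi, dif_pos (by omega), zero_mul, zero_add]
      simp only [Smat_apply hm hd, Fin.val_mk]
      by_cases hle : (i : ℕ) ≤ (k : ℕ) + 1
      · rw [if_pos hle, if_pos (by omega),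
          show n - ((k : ℕ) + 1 - (i : ℕ)) = n - ((k : ℕ) - ((i : ℕ) - 1)) from by omega]
      · rw [if_neg hle, if_neg (by omega)]
  · rw [fin_sum_ite_zero _ (by omega), if_pos (show (k : ℕ) = n - 1 from by omega), mul_one]
    by_cases hi : (i : ℕ) = 0
    · rw [if_pos hi, dif_neg (by omega), hi, show n - 1 - (k : ℕ) = 0 from by omega]
      ring
    · rw [if_neg hi, dif_pos (by omega), zero_mul, zero_add, Smat_apply hm hd]
      simp only [Fin.val_mk]
      rw [if_pos (by omega), show n - ((k : ℕ) - ((i : ℕ) - 1)) = (i : ℕ) from by omega]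
      ring

lemma pow_red (hm : p.Monic) (hd : p.natDegree = n) (hn : 1 ≤ n) (m : ℕ) (j : Fin n) :
    ∃ q : Polynomial ℝ,
      Pcol (Cmat n p ^ m * Smat n p) j = Polynomial.X ^ m * Pcol (Smat n p) j - q * p := by
  induction m with
  | zero =>
      exact ⟨0, by rw [pow_zero, Matrix.one_mul, pow_zero, one_mul, zero_mul, sub_zero]⟩
  | succ m ih =>
      obtain ⟨q, hq⟩ := ih
      refine ⟨Polynomial.X * q
        + Polynomial.C ((Cmat n p ^ m * Smat n p) ⟨n - 1, by omega⟩ j), ?_⟩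
      rw [pow_succ', Matrix.mul_assoc, Pcol_Cmat_mul hm hd hn, hq, pow_succ']
      ring

lemma key_id (hm : p.Monic) (hd : p.natDegree = n) (hn : 1 ≤ n)
    (ε : ℝ) (hε : ε * ε = 1) (hsym : ∀ j ≤ n, p.coeff (n - j) = ε * p.coeff j) (j : Fin n) :
    Polynomial.X ^ n * Pcol (Smat n p) j + Polynomial.C ε * Pcol (Smat n p)ᵀ j
      = Polynomial.X ^ (j : ℕ) * p := by
  have hj := j.isLt
  ext d
  rw [Polynomial.coeff_add, Polynomial.coeff_C_mul, mul_comm (Polynomial.X ^ n),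
    mul_comm (Polynomial.X ^ (j : ℕ)), Polynomial.coeff_mul_X_pow',
    Polynomial.coeff_mul_X_pow', coeff_Pcol, coeff_Pcol]
  simp only [Matrix.transpose_apply, Smat_apply hm hd, Fin.val_mk]
  rcases lt_or_ge d (j : ℕ) with h1 | h1
  · rw [if_neg (by omega), dif_pos (by omega), if_neg (by omega), if_neg (by omega)]
    ring
  · rcases lt_or_ge d n with h2 | h2
    · rw [if_neg (by omega), dif_pos h2, if_pos h1, if_pos h1,
        hsym (d - (j : ℕ)) (by omega)]
      linear_combination p.coeff (d - (j : ℕ)) * hε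
    · rcases le_or_gt (d - n) (j : ℕ) with h3 | h3
      · rw [if_pos h2, dif_pos (by omega), if_pos h3, dif_neg (by omega), if_pos (by omega),
          show n - ((j : ℕ) - (d - n)) = d - (j : ℕ) from by omega]
        ring
      · rw [if_pos h2]
        by_cases h4 : d - n < n
        · rw [dif_pos h4, if_neg (by omega), dif_neg (by omega), if_pos (by omega),
            Polynomial.coeff_eq_zero_of_natDegree_lt (show p.natDegree < d - (j : ℕ) from by
              rw [hd]; omega)]
          ring
        · rw [dif_neg h4, dif_neg (by omega), if_pos (by omega),
            Polynomial.coeff_eq_zero_of_natDegree_lt (show p.natDegree < d - (j : ℕ) from by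
              rw [hd]; omega)]
          ring

lemma degree_combo_lt (hn : 1 ≤ n) (A B : Matrix (Fin n) (Fin n) ℝ) (c : ℝ) (j : Fin n) :
    (Pcol A j + Polynomial.C c * Pcol B j).degree < (n : ℕ) := by
  rw [Polynomial.degree_lt_iff_coeff_zero]
  intro m hmm
  rw [Polynomial.coeff_add, Polynomial.coeff_C_mul, coeff_Pcol, coeff_Pcol,
    dif_neg (by omega), dif_neg (by omega)]
  ring

lemma CnS (hm : p.Monic) (hd : p.natDegree = n) (hn : 1 ≤ n)
    (ε : ℝ) (hε : ε * ε = 1) (hsym : ∀ j ≤ n, p.coeff (n - j) = ε * p.coeff j) :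
    Cmat n p ^ n * Smat n p = (-ε) • (Smat n p)ᵀ := by
  have hp0 : p ≠ 0 := hm.ne_zero
  have hpdeg : p.degree = (n : ℕ) := by rw [Polynomial.degree_eq_natDegree hp0, hd]
  apply Pcol_eq
  intro j
  obtain ⟨q, hq⟩ := pow_red hm hd hn n j
  have hid := key_id hm hd hn ε hε hsym j
  have heq : Pcol (Cmat n p ^ n * Smat n p) j + Polynomial.C ε * Pcol (Smat n p)ᵀ j
      = (Polynomial.X ^ (j : ℕ) - q) * p := by
    rw [hq]
    linear_combination hid
  have hz : (Polynomial.X ^ (j : ℕ) - q) * p = 0 := by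
    by_contra hne
    have hgn : (Polynomial.X ^ (j : ℕ) - q) ≠ 0 := fun h => hne (by rw [h, zero_mul])
    have hge : ((n : ℕ) : WithBot ℕ) ≤ ((Polynomial.X ^ (j : ℕ) - q) * p).degree := by
      rw [Polynomial.degree_mul, hpdeg]
      exact le_add_of_nonneg_left (Polynomial.zero_le_degree_iff.mpr hgn)
    rw [← heq] at hge
    exact absurd (degree_combo_lt hn _ _ _ j) (not_lt.mpr hge)
  rw [hz] at heq
  have hsc : Pcol ((-ε) • (Smat n p)ᵀ) j = Polynomial.C (-ε) * Pcol (Smat n p)ᵀ j := by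
    unfold Pcol
    rw [Finset.mul_sum]
    apply Finset.sum_congr rfl
    intro i _
    rw [Matrix.smul_apply, smul_eq_mul, Polynomial.C_mul, mul_assoc]
  rw [hsc, map_neg]
  linear_combination heq

lemma S_mul_Rpow (hm : p.Monic) (hd : p.natDegree = n) (hn : 1 ≤ n) (m : ℕ) :
    Smat n p * Rmat n p ^ m = Cmat n p ^ m * Smat n p := by
  induction m with
  | zero => rw [pow_zero, pow_zero, Matrix.mul_one, Matrix.one_mul]
  | succ m ih =>
      rw [pow_succ, ← Matrix.mul_assoc, ih, Matrix.mul_assoc, SR_eq_CS hm hd hn,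
        ← Matrix.mul_assoc, ← pow_succ]

end Stmt14

open Stmt14 in
theorem stmt14 (n : ℕ) (hn : 1 ≤ n) (b : ℕ) (hb : b = 1 ∨ b = 2)
    (p : Polynomial ℝ) (hmonic : p.Monic) (hdeg : p.natDegree = n)
    (hsym : ∀ j ≤ n, p.coeff (n - j) = (-1 : ℝ) ^ (b - 1) * p.coeff j)
    (hroots : ∀ z : ℂ, (p.map (algebraMap ℝ ℂ)).IsRoot z → ‖z‖ = 1) :
    let S : Matrix (Fin n) (Fin n) ℝ := Matrix.of fun i j =>
      if (i : ℕ) = (j : ℕ) then 1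
      else if (i : ℕ) < (j : ℕ) then p.coeff (n - ((j : ℕ) - (i : ℕ))) else 0
    let R : Matrix (Fin n) (Fin n) ℝ := Matrix.of fun i j =>
      if (i : ℕ) = 0 then -p.coeff (n - 1 - (j : ℕ))
      else if (i : ℕ) = (j : ℕ) + 1 then 1 else 0
    ((-1 : ℝ) ^ b) • (S⁻¹ * S.transpose) = R ^ n := by
  intro S R
  have hε : ((-1 : ℝ) ^ (b - 1)) * ((-1 : ℝ) ^ (b - 1)) = 1 := by
    rcases hb with rfl | rfl <;> norm_num
  have hdet : (Smat n p).det = 1 := by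
    rw [Matrix.det_of_upperTriangular (M := Smat n p)]
    · apply Finset.prod_eq_one
      intro i _
      unfold Smat
      simp
    · intro i j hij
      have hij' : (j : ℕ) < (i : ℕ) := hij
      unfold Smat
      simp only [Matrix.of_apply]
      rw [if_neg (by omega), if_neg (by omega)]
  have hunit : IsUnit (Smat n p).det := by rw [hdet]; exact isUnit_one
  have hfin := CnS hmonic hdeg hn ((-1 : ℝ) ^ (b - 1)) hε hsym
  have hmain : Smat n p * Rmat n p ^ n = ((-1 : ℝ) ^ b) • (Smat n p)ᵀ := by
    rw [S_mul_Rpow hmonic hdeg hn n, hfin]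
    congr 1
    rcases hb with rfl | rfl <;> norm_num
  show ((-1 : ℝ) ^ b) • ((Smat n p)⁻¹ * (Smat n p)ᵀ) = Rmat n p ^ n
  rw [← Matrix.mul_smul, ← hmain, ← Matrix.mul_assoc, Matrix.nonsing_inv_mul _ hunit,
    Matrix.one_mul]
end

section
/- For 1 ≤ j < ⌊n/2⌋, the element of type D_n(a_j), with characteristic polynomial (t^{n-1-j} + 1)(t^{j+1} + 1), satisfies 12·nnVar(Sp) = n - 1/(n-1-j) - 1/(j+1), and this strictly exceeds n·(α_n - α_1) = n(n-2-j)/(n-1-j); i.e. the strict variance inequality nnVar > n(α_n - α_1)/12 holds. -/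
/-!
The spectrum of `t^m + 1` is `α_i = (2i - 1)/(2m) - 1/2`, `i = 1, …, m`, and summing the squares
gives `12 · nnVar(t^m + 1) = m - 1/m`. With `a = n - 1 - j` and `b = j + 1` the two sides of the
inequality are `a + b - 1/a - 1/b` and `(a + b)(a - 1)/a`, which differ by `(a + b)(b - 1)/(ab)`,
positive as soon as `a > 0` and `b > 1`.
-/

open Finset

noncomputable def nnVarXPowAddOne (m : ℕ) : ℝ :=
  ∑ i ∈ Icc 1 m, ((2 * (i : ℝ) - 1) / (2 * (m : ℝ)) - 1 / 2) ^ 2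

theorem sum_Icc_sq_two_mul_sub_one_sub (m : ℕ) (c : ℝ) :
    ∑ i ∈ Icc 1 m, (2 * (i : ℝ) - 1 - c) ^ 2 = m * (4 * m ^ 2 - 1) / 3 - 2 * c * m ^ 2 + m * c ^ 2 := by
  induction m with
  | zero => simp
  | succ k ih =>
    rw [sum_Icc_succ_top (by omega), ih]
    push_cast
    ring

theorem twelve_mul_nnVarXPowAddOne (m : ℕ) : 12 * nnVarXPowAddOne m = m - 1 / m := by
  rcases Nat.eq_zero_or_pos m with rfl | hm
  · simp [nnVarXPowAddOne]
  have hm0 : (m : ℝ) ≠ 0 := by positivity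
  have hcentre : ∀ i ∈ Icc 1 m, ((2 * (i : ℝ) - 1) / (2 * (m : ℝ)) - 1 / 2) ^ 2
      = (2 * (i : ℝ) - 1 - m) ^ 2 / (4 * (m : ℝ) ^ 2) := by
    intro i _
    field_simp
    ring
  rw [nnVarXPowAddOne, sum_congr rfl hcentre, ← sum_div, sum_Icc_sq_two_mul_sub_one_sub]
  field_simp
  ring

theorem mul_sub_one_div_lt_add_sub_inv_sub_inv {a b : ℝ} (ha : 0 < a) (hb : 1 < b) :
    (a + b) * ((a - 1) / a) < a + b - 1 / a - 1 / b := by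
  have hgap : a + b - 1 / a - 1 / b - (a + b) * ((a - 1) / a) = (a + b) * (b - 1) / (a * b) := by
    field_simp
    ring
  have hpos : 0 < (a + b) * (b - 1) / (a * b) := by
    apply div_pos <;> nlinarith
  linarith

theorem stmt18 (n j : ℕ) (hj1 : 1 ≤ j) (hj2 : j < n / 2) :
    let V : ℕ → ℝ := fun m =>
      ∑ i ∈ Finset.Icc 1 m, ((2 * (i : ℝ) - 1) / (2 * (m : ℝ)) - 1 / 2) ^ 2
    12 * (V (n - 1 - j) + V (j + 1))
        = (n : ℝ) - 1 / ((n : ℝ) - 1 - (j : ℝ)) - 1 / ((j : ℝ) + 1) ∧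
    12 * (V (n - 1 - j) + V (j + 1))
        > (n : ℝ) * (((n : ℝ) - 2 - (j : ℝ)) / ((n : ℝ) - 1 - (j : ℝ))) := by
  intro V
  have hV : ∀ m, 12 * V m = m - 1 / m := twelve_mul_nnVarXPowAddOne
  have hcast : ((n - 1 - j : ℕ) : ℝ) = n - 1 - j := by
    rw [Nat.cast_sub (by omega), Nat.cast_sub (by omega), Nat.cast_one]
  have heq : 12 * (V (n - 1 - j) + V (j + 1)) = n - 1 / ((n : ℝ) - 1 - j) - 1 / ((j : ℝ) + 1) := by
    rw [mul_add, hV, hV, hcast]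
    push_cast
    ring
  refine ⟨heq, ?_⟩
  have ha : (0 : ℝ) < n - 1 - j := by
    rw [← hcast]
    exact_mod_cast (by omega : 0 < n - 1 - j)
  have hb : (1 : ℝ) < j + 1 := by
    have : (1 : ℝ) ≤ j := by exact_mod_cast hj1
    linarith
  have key := mul_sub_one_div_lt_add_sub_inv_sub_inv ha hb
  rw [heq, gt_iff_lt]
  convert key using 2 <;> ring
end
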